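/- For a single-interface solution of the lattice equation with Φ'(u) = u - sgn(u), if the phase transition at index k occurs at a finite time t*_k, then u_{k-1}(t*_k) > 2, the jump relation u̇_k(t*_k + 0) = 4 + u̇_k(t*_k - 0) ≥ 4 holds, and consecutive transition times satisfy t*_{k+1} - t*_k ≥ ln √((D+2)/(D-2)), where D = max{2, sup_j u_j(0)}. -/

import Mathlib

/-!
Between two transitions the state lies in some `X_κ`, where `Φ'` is affine on every entry, so the
lattice equation is linear with explicit forcing. Just before the transition time `T` the state is
in `X_k` and `u̇_k = Δu_k - 2`; just after, it is in `X_{k+1}` and `u̇_k = Δu_k + 2`: this is the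
jump by `4`. As `u_k < 0` reaches `0` at `T`, the left limit `Δu_k(T) - 2` is nonnegative, and
since `u_{k+1}(T) < 0` (`e^{2t} u_{k+1}` decreases while `u_k, u_{k+2} < 0`) this forces
`u_{k-1}(T) > 2`. For the gap between transitions, a discrete maximum principle bounds every
entry by `D` up to `T'`, so on `(T, T')` the quantity `e^{2t} u_k` grows at rate at most
`(D + 2) e^{2t}`; since `u_k(T') > 2` by the first part at index `k + 1`, this gives
`e^{2(T' - T)} ≥ (D + 2) / (D - 2)`.
-/

open Real Filter

/-- Sign function with the convention `sgn 0 = +1`. -/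
noncomputable def dsgn (x : ℝ) : ℝ := if x < 0 then -1 else 1

/-- The piecewise affine bistable nonlinearity `Φ'(u) = u - sgn u`. -/
noncomputable def dphi (u : ℝ) : ℝ := u - dsgn u

/-- The discrete Laplacian on ℤ. -/
def dLap (p : ℤ → ℝ) (j : ℤ) : ℝ := p (j + 1) - 2 * p j + p (j - 1)

/-- The single-interface state space `X_k`: entries for `j < k` have positive infimum and
finite supremum, entries for `j ≥ k` have infimum `> -2` and supremum `< 0`. -/
def Xset (k : ℤ) : Set (ℤ → ℝ) :=
  {u | (∃ a > (0 : ℝ), ∀ j < k, a ≤ u j) ∧ (∃ b : ℝ, ∀ j < k, u j ≤ b) ∧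
       (∃ c > (-2 : ℝ), ∀ j ≥ k, c ≤ u j) ∧ (∃ d < (0 : ℝ), ∀ j ≥ k, u j ≤ d)}

/-- Single-interface solution of the lattice equation `u̇_j = ΔΦ'(u_j)` with
`Φ'(u) = u - sgn u`, with phase-transition times `tstar k ∈ (0, ∞]` (value `⊤` means
no transition at index `k`), following Definition 3.1 of the paper. -/
def IsSIS (u : ℝ → ℤ → ℝ) (k₁ : ℤ) (tstar : ℤ → EReal) : Prop :=
  (∀ j : ℤ, ContinuousOn (fun t => u t j) (Set.Ici (0 : ℝ))) ∧
  tstar (k₁ - 1) = (0 : EReal) ∧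
  (∀ k : ℤ, k₁ ≤ k → 0 < tstar k) ∧
  (∀ k : ℤ, k₁ ≤ k → tstar (k - 1) = ⊤ ∨ tstar (k - 1) < tstar k) ∧
  (∀ (j : ℤ) (t : ℝ), 0 ≤ t → (∀ k : ℤ, k₁ ≤ k → (t : EReal) ≠ tstar k) →
    HasDerivAt (fun s => u s j) (dLap (fun i => dphi (u t i)) j) t) ∧
  (∀ k : ℤ, k₁ ≤ k → ∀ T : ℝ, tstar k = (T : EReal) →
    u T k = 0 ∧ ∃ L > (0 : ℝ),
      Tendsto (deriv (fun s => u s k)) (nhdsWithin T (Set.Ioi T)) (nhds L)) ∧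
  (∀ k : ℤ, k₁ ≤ k → ∀ t : ℝ, tstar (k - 1) < (t : EReal) → (t : EReal) < tstar k →
    (fun j => u t j) ∈ Xset k)

open Set Topology

section Monotonicity

variable {f f' : ℝ → ℝ}

theorem le_of_hasDerivAt_nonneg_off_finset (E : Finset ℝ) {a b : ℝ} (hab : a ≤ b)
    (hf : ContinuousOn f (Icc a b)) (hder : ∀ x ∈ Ioo a b, x ∉ E → HasDerivAt f (f' x) x)
    (hnonneg : ∀ x ∈ Ioo a b, x ∉ E → 0 ≤ f' x) : f a ≤ f b := by
  induction E using Finset.induction_on generalizing a b with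
  | empty =>
    refine monotoneOn_of_hasDerivWithinAt_nonneg (f' := f') (convex_Icc a b) hf (fun x hx => ?_)
      (fun x hx => ?_) (left_mem_Icc.2 hab) (right_mem_Icc.2 hab) hab
    all_goals rw [interior_Icc] at hx
    exacts [(hder x hx (Finset.notMem_empty x)).hasDerivWithinAt,
      hnonneg x hx (Finset.notMem_empty x)]
  | insert c E _ ih =>
    by_cases hc : c ∈ Ioo a b
    · have hne : ∀ x ∈ Ioo a c ∪ Ioo c b, x ∉ E → x ∉ insert c E := fun x hx hxE hx' => by
        rcases Finset.mem_insert.1 hx' with rfl | h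
        · simp at hx
        · exact hxE h
      have hac : Ioo a c ⊆ Ioo a b := Ioo_subset_Ioo_right hc.2.le
      have hcb : Ioo c b ⊆ Ioo a b := Ioo_subset_Ioo_left hc.1.le
      calc f a ≤ f c := ih hc.1.le (hf.mono (Icc_subset_Icc_right hc.2.le))
              (fun x hx hxE => hder x (hac hx) (hne x (.inl hx) hxE))
              (fun x hx hxE => hnonneg x (hac hx) (hne x (.inl hx) hxE))
        _ ≤ f b := ih hc.2.le (hf.mono (Icc_subset_Icc_left hc.1.le))
              (fun x hx hxE => hder x (hcb hx) (hne x (.inr hx) hxE))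
              (fun x hx hxE => hnonneg x (hcb hx) (hne x (.inr hx) hxE))
    · have hne : ∀ x ∈ Ioo a b, x ∉ E → x ∉ insert c E := fun x hx hxE hx' => by
        rcases Finset.mem_insert.1 hx' with rfl | h
        exacts [hc hx, hxE h]
      exact ih hab hf (fun x hx hxE => hder x hx (hne x hx hxE))
        (fun x hx hxE => hnonneg x hx (hne x hx hxE))

theorem hasDerivAt_exp_mul_mul {r x d : ℝ} (hf : HasDerivAt f d x) :
    HasDerivAt (fun t => exp (r * t) * f t) (exp (r * x) * (d + r * f x)) x := by
  have he : HasDerivAt (fun t => exp (r * t)) (exp (r * x) * r) x := by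
    simpa using ((hasDerivAt_id x).const_mul r).exp
  exact (he.mul hf).congr_deriv (by ring)

theorem le_exp_mul_sub_of_le_deriv_add_mul (E : Finset ℝ) {a b r c : ℝ} (hr : 0 < r)
    (hab : a ≤ b) (hf : ContinuousOn f (Icc a b))
    (hder : ∀ x ∈ Ioo a b, x ∉ E → HasDerivAt f (f' x) x)
    (hbound : ∀ x ∈ Ioo a b, x ∉ E → c ≤ f' x + r * f x) :
    c / r * (exp (r * b) - exp (r * a)) ≤ exp (r * b) * f b - exp (r * a) * f a := by
  have hmono := le_of_hasDerivAt_nonneg_off_finset E hab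
    (f := fun t => exp (r * t) * (f t - c / r))
    (f' := fun x => exp (r * x) * (f' x + r * f x - c))
    ((continuous_exp.comp (continuous_const_mul r)).continuousOn.mul (hf.sub continuousOn_const))
    (fun x hx hxE => (hasDerivAt_exp_mul_mul ((hder x hx hxE).sub_const (c / r))).congr_deriv
      (by field_simp; ring))
    (fun x hx hxE => mul_nonneg (exp_pos _).le (sub_nonneg.2 (hbound x hx hxE)))
  linarith

theorem exp_mul_sub_le_of_deriv_add_mul_le (E : Finset ℝ) {a b r c : ℝ} (hr : 0 < r)
    (hab : a ≤ b) (hf : ContinuousOn f (Icc a b))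
    (hder : ∀ x ∈ Ioo a b, x ∉ E → HasDerivAt f (f' x) x)
    (hbound : ∀ x ∈ Ioo a b, x ∉ E → f' x + r * f x ≤ c) :
    exp (r * b) * f b - exp (r * a) * f a ≤ c / r * (exp (r * b) - exp (r * a)) := by
  have := le_exp_mul_sub_of_le_deriv_add_mul (f := -f) (f' := -f') (c := -c) E hr hab hf.neg
    (fun x hx hxE => (hder x hx hxE).neg) (fun x hx hxE => by
      simp only [Pi.neg_apply]; linarith [hbound x hx hxE])
  simp only [Pi.neg_apply, neg_div] at this
  linarith

end Monotonicity

theorem ContinuousOn.pos_of_forall_Ico_pos {f : ℝ → ℝ} {a b : ℝ} (hf : ContinuousOn f (Icc a b))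
    (hstep : ∀ c ∈ Icc a b, (∀ y ∈ Ico a c, 0 < f y) → 0 < f c) : ∀ y ∈ Icc a b, 0 < f y := by
  by_contra! hZ
  set Z := Icc a b ∩ f ⁻¹' Iic 0
  have hZbdd : BddBelow Z := ⟨a, fun z hz => hz.1.1⟩
  have hmem : sInf Z ∈ Z :=
    (hf.preimage_isClosed_of_isClosed isClosed_Icc isClosed_Iic).csInf_mem hZ hZbdd
  refine not_lt.2 hmem.2 (hstep _ hmem.1 fun y hy => not_le.1 fun hy' => ?_)
  exact not_le.2 hy.2 (csInf_le hZbdd ⟨⟨hy.1, hy.2.le.trans hmem.1.2⟩, hy'⟩)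

theorem nonneg_of_tendsto_deriv_of_lt {f : ℝ → ℝ} {s : Set ℝ} {a L : ℝ}
    (hdiff : DifferentiableOn ℝ f s) (hs : s ∈ 𝓝[<] a) (hcont : ContinuousWithinAt f s a)
    (hlim : Tendsto (deriv f) (𝓝[<] a) (𝓝 L)) (hlt : ∀ᶠ x in 𝓝[<] a, f x < f a) : 0 ≤ L := by
  have hslope : Tendsto (slope f a) (𝓝[<] a) (𝓝 L) :=
    (hasDerivWithinAt_iff_tendsto_slope' (s := Iio a) (lt_irrefl a)).1
      ((hasDerivWithinAt_Iic_of_tendsto_deriv hdiff hcont hs hlim).mono Iio_subset_Iic_self)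
  refine ge_of_tendsto hslope ?_
  filter_upwards [hlt, self_mem_nhdsWithin] with x hx hxa
  rw [slope_def_field]
  exact (div_pos_of_neg_of_neg (sub_neg.2 hx) (sub_neg.2 hxa)).le

theorem dLap_dphi_add_two_mul (p : ℤ → ℝ) (j : ℤ) :
    dLap (fun i => dphi (p i)) j + 2 * p j =
      dphi (p (j + 1)) + dphi (p (j - 1)) + 2 * dsgn (p j) := by
  simp only [dLap, dphi]
  ring

theorem dsgn_le_one (x : ℝ) : dsgn x ≤ 1 := by
  unfold dsgn; split_ifs <;> norm_num

theorem dsgn_of_nonneg {x : ℝ} (hx : 0 ≤ x) : dsgn x = 1 := if_neg (not_lt.2 hx)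

theorem dphi_of_neg {x : ℝ} (hx : x < 0) : dphi x = x + 1 := by
  simp [dphi, dsgn, hx]

theorem dphi_of_nonneg {x : ℝ} (hx : 0 ≤ x) : dphi x = x - 1 := by
  simp [dphi, dsgn_of_nonneg hx]

theorem neg_one_le_dphi {x : ℝ} (hx : -2 ≤ x) : -1 ≤ dphi x := by
  rcases lt_or_ge x 0 with h | h
  · rw [dphi_of_neg h]; linarith
  · rw [dphi_of_nonneg h]; linarith

theorem dphi_le_sub_one {x M : ℝ} (hx : x ≤ M) (hM : 2 ≤ M) : dphi x ≤ M - 1 := by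
  rcases lt_or_ge x 0 with h | h
  · rw [dphi_of_neg h]; linarith
  · rw [dphi_of_nonneg h]; linarith

namespace Xset

variable {p : ℤ → ℝ} {κ κ' j : ℤ}

theorem neg_of_le (hp : p ∈ Xset κ) (hj : κ ≤ j) : p j < 0 := by
  obtain ⟨-, -, -, d, hd, hdle⟩ := hp
  exact (hdle j hj).trans_lt hd

theorem pos_of_lt (hp : p ∈ Xset κ) (hj : j < κ) : 0 < p j := by
  obtain ⟨⟨a, ha, hale⟩, -⟩ := hp
  exact ha.trans_le (hale j hj)

theorem ne_zero (hp : p ∈ Xset κ) (j : ℤ) : p j ≠ 0 := by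
  rcases lt_or_ge j κ with hj | hj
  exacts [(pos_of_lt hp hj).ne', (neg_of_le hp hj).ne]

theorem neg_two_le (hp : p ∈ Xset κ) (j : ℤ) : -2 ≤ p j := by
  rcases lt_or_ge j κ with hj | hj
  · linarith [pos_of_lt hp hj]
  · obtain ⟨-, -, ⟨c, hc, hcle⟩, -⟩ := hp
    linarith [hcle j hj]

theorem exists_le (hp : p ∈ Xset κ) : ∃ B, ∀ j, p j ≤ B := by
  obtain ⟨-, ⟨b, hb⟩, -, -⟩ := id hp
  refine ⟨max b 0, fun j => ?_⟩
  rcases lt_or_ge j κ with hj | hj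
  exacts [(hb j hj).trans (le_max_left _ _), (neg_of_le hp hj).le.trans (le_max_right _ _)]

theorem eq (hp : p ∈ Xset κ) (hp' : p ∈ Xset κ') : κ = κ' := by
  by_contra hne
  rcases lt_or_gt_of_ne hne with h | h
  · exact lt_asymm (neg_of_le hp le_rfl) (pos_of_lt hp' h)
  · exact lt_asymm (neg_of_le hp' le_rfl) (pos_of_lt hp h)

theorem dLap_dphi_self (hp : p ∈ Xset j) : dLap (fun i => dphi (p i)) j = dLap p j - 2 := by
  simp only [dLap, dphi_of_neg (neg_of_le hp (by omega : j ≤ j + 1)),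
    dphi_of_neg (neg_of_le hp le_rfl),
    dphi_of_nonneg (pos_of_lt hp (sub_one_lt j)).le]
  ring

theorem dLap_dphi_of_succ (hp : p ∈ Xset (j + 1)) :
    dLap (fun i => dphi (p i)) j = dLap p j + 2 := by
  simp only [dLap, dphi_of_neg (neg_of_le hp le_rfl),
    dphi_of_nonneg (pos_of_lt hp (by omega : j < j + 1)).le,
    dphi_of_nonneg (pos_of_lt hp (by omega : j - 1 < j + 1)).le]
  ring

theorem dLap_dphi_of_lt (hp : p ∈ Xset κ) (hj : κ < j) :
    dLap (fun i => dphi (p i)) j = dLap p j := by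
  simp only [dLap, dphi_of_neg (neg_of_le hp (by omega : κ ≤ j + 1)),
    dphi_of_neg (neg_of_le hp hj.le), dphi_of_neg (neg_of_le hp (by omega : κ ≤ j - 1))]
  ring

end Xset

def IsLatticeSolutionOn (v : ℝ → ℤ → ℝ) (E : Finset ℝ) (a b : ℝ) : Prop :=
  ∀ j, ContinuousOn (fun t => v t j) (Icc a b) ∧
    ∀ x ∈ Ioo a b, x ∉ E → HasDerivAt (fun t => v t j) (dLap (fun i => dphi (v x i)) j) x

namespace IsLatticeSolutionOn

variable {v : ℝ → ℤ → ℝ} {E : Finset ℝ} {a b : ℝ}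

theorem mono (hv : IsLatticeSolutionOn v E a b) {a' b' : ℝ} (ha : a ≤ a') (hb : b' ≤ b) :
    IsLatticeSolutionOn v E a' b' := fun j =>
  ⟨(hv j).1.mono (Icc_subset_Icc ha hb),
    fun x hx hxE => (hv j).2 x ⟨ha.trans_lt hx.1, hx.2.trans_le hb⟩ hxE⟩

/-- Where `v_j ≥ 0` and the neighbours stay above `-2`, `v̇_j + 2 v_j ≥ 0`; so a positive entry
never reaches zero, and `e^{2t} v_j` increases. -/
theorem exp_mul_le_of_pos (hv : IsLatticeSolutionOn v E a b)
    (hlow : ∀ j, ∀ t ∈ Icc a b, -2 ≤ v t j) {j : ℤ} {s : ℝ} (hs : s ∈ Icc a b)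
    (hpos : 0 < v s j) : exp (2 * s) * v s j ≤ exp (2 * b) * v b j := by
  have hgrow : ∀ c ∈ Icc s b, (∀ y ∈ Ico s c, 0 < v y j) →
      exp (2 * s) * v s j ≤ exp (2 * c) * v c j := fun c hc hposc => by
    have hvc := (hv.mono hs.1 hc.2) j
    have := le_exp_mul_sub_of_le_deriv_add_mul E two_pos hc.1 hvc.1 hvc.2 (c := 0)
      fun x hx _ => by
        have hx' : x ∈ Icc a b := ⟨hs.1.trans hx.1.le, hx.2.le.trans hc.2⟩
        rw [dLap_dphi_add_two_mul, dsgn_of_nonneg (hposc x ⟨hx.1.le, hx.2⟩).le]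
        linarith [neg_one_le_dphi (hlow (j + 1) x hx'), neg_one_le_dphi (hlow (j - 1) x hx')]
    linarith
  have hpersist := ContinuousOn.pos_of_forall_Ico_pos ((hv.mono hs.1 le_rfl) j).1
    fun c hc hposc => pos_of_mul_pos_right ((mul_pos (exp_pos _) hpos).trans_le
      (hgrow c hc hposc)) (exp_pos _).le
  exact hgrow b ⟨hs.2, le_rfl⟩ fun y hy => hpersist y ⟨hy.1, hy.2.le⟩

theorem exists_le_of_neg_two_le (hv : IsLatticeSolutionOn v E a b)
    (hlow : ∀ j, ∀ t ∈ Icc a b, -2 ≤ v t j) (hb : ∃ B, ∀ j, v b j ≤ B) :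
    ∃ B, ∀ j, ∀ t ∈ Icc a b, v t j ≤ B := by
  obtain ⟨B, hB⟩ := hb
  refine ⟨exp (2 * (b - a)) * max B 0, fun j t ht => ?_⟩
  rcases le_or_gt (v t j) 0 with hneg | hpos
  · exact hneg.trans (by positivity)
  calc v t j = exp (-(2 * t)) * (exp (2 * t) * v t j) := by
        rw [← mul_assoc, ← exp_add, neg_add_cancel, exp_zero, one_mul]
    _ ≤ exp (-(2 * t)) * (exp (2 * b) * max B 0) := by
        refine mul_le_mul_of_nonneg_left ((hv.exp_mul_le_of_pos hlow ht hpos).trans ?_)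
          (exp_pos _).le
        exact mul_le_mul_of_nonneg_left ((hB j).trans (le_max_left _ _)) (exp_pos _).le
    _ ≤ exp (2 * (b - a)) * max B 0 := by
        rw [← mul_assoc, ← exp_add]
        gcongr
        linarith [ht.1]

/-- An upper bound `M ≥ D := max 2 (⨆ i, v 0 i)` improves to `M - e^{-2b} (M - D)`, since
`v̇_j + 2 v_j ≤ 2M`; so the least such bound is `D`. -/
theorem le_max_two_iSup (hv : IsLatticeSolutionOn v E 0 b)
    (hbdd : ∃ B, ∀ j, ∀ t ∈ Icc 0 b, v t j ≤ B) :
    ∀ j, ∀ t ∈ Icc 0 b, v t j ≤ max 2 (⨆ i, v 0 i) := by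
  intro j₀ t₀ ht₀
  have hb : 0 ≤ b := ht₀.1.trans ht₀.2
  obtain ⟨B, hB⟩ := hbdd
  set D := max 2 (⨆ i, v 0 i)
  have hv0 : ∀ i, v 0 i ≤ D := by
    refine fun i => le_max_of_le_right (le_ciSup ⟨B, ?_⟩ i)
    rintro _ ⟨i, rfl⟩
    exact hB i 0 ⟨le_rfl, hb⟩
  have himprove : ∀ M, D ≤ M → (∀ j, ∀ t ∈ Icc 0 b, v t j ≤ M) →
      ∀ j, ∀ t ∈ Icc 0 b, v t j ≤ M - exp (-(2 * b)) * (M - D) := by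
    intro M hDM hM j t ht
    have hM2 : 2 ≤ M := (le_max_left _ _).trans hDM
    have hvt := (hv.mono le_rfl ht.2) j
    have hgrowth := exp_mul_sub_le_of_deriv_add_mul_le E two_pos ht.1 hvt.1 hvt.2 (c := 2 * M)
      fun x hx _ => by
        have hx' : x ∈ Icc 0 b := ⟨hx.1.le, hx.2.le.trans ht.2⟩
        rw [dLap_dphi_add_two_mul]
        linarith [dphi_le_sub_one (hM (j + 1) x hx') hM2, dphi_le_sub_one (hM (j - 1) x hx') hM2,
          dsgn_le_one (v x j)]
    rw [mul_zero, exp_zero] at hgrowth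
    have hdecay : exp (2 * t) * (v t j - M) ≤ D - M := by linarith [hv0 j]
    calc v t j = M + exp (-(2 * t)) * (exp (2 * t) * (v t j - M)) := by
          rw [exp_neg, inv_mul_cancel_left₀ (exp_pos _).ne']; ring
      _ ≤ M + exp (-(2 * t)) * (D - M) := by gcongr
      _ ≤ M - exp (-(2 * b)) * (M - D) := by
          nlinarith [exp_le_exp.2 (by linarith [ht.2] : -(2 * b) ≤ -(2 * t))]
  set S := {M | D ≤ M ∧ ∀ j, ∀ t ∈ Icc 0 b, v t j ≤ M}
  have hSne : S.Nonempty :=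
    ⟨max B D, le_max_right _ _, fun j t ht => (hB j t ht).trans (le_max_left _ _)⟩
  have hSbdd : BddBelow S := ⟨D, fun M hM => hM.1⟩
  have hm : sInf S ∈ S :=
    ⟨le_csInf hSne fun M hM => hM.1, fun j t ht => le_csInf hSne fun M hM => hM.2 j t ht⟩
  have hm' : sInf S - exp (-(2 * b)) * (sInf S - D) ∈ S := by
    refine ⟨?_, himprove _ hm.1 hm.2⟩
    nlinarith [exp_le_one_iff.2 (by linarith : -(2 * b) ≤ 0), hm.1]
  have hmD : sInf S ≤ D := by nlinarith [csInf_le hSbdd hm', exp_pos (-(2 * b))]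
  exact (hm.2 j₀ t₀ ht₀).trans hmD

end IsLatticeSolutionOn

namespace IsSIS

variable {u : ℝ → ℤ → ℝ} {k₁ : ℤ} {tstar : ℤ → EReal} {k : ℤ} {T : ℝ}

theorem continuousOn (h : IsSIS u k₁ tstar) (j : ℤ) :
    ContinuousOn (fun t => u t j) (Ici 0) := h.1 j

theorem tstar_sub_one_eq_zero (h : IsSIS u k₁ tstar) : tstar (k₁ - 1) = 0 := h.2.1

theorem tstar_pos (h : IsSIS u k₁ tstar) (hk : k₁ ≤ k) : 0 < tstar k := h.2.2.1 k hk

theorem tstar_sub_one_eq_top_or_lt (h : IsSIS u k₁ tstar) (hk : k₁ ≤ k) :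
    tstar (k - 1) = ⊤ ∨ tstar (k - 1) < tstar k := h.2.2.2.1 k hk

theorem hasDerivAt (h : IsSIS u k₁ tstar) (j : ℤ) {t : ℝ} (ht : 0 ≤ t)
    (hne : ∀ κ, k₁ ≤ κ → (t : EReal) ≠ tstar κ) :
    HasDerivAt (fun s => u s j) (dLap (fun i => dphi (u t i)) j) t := h.2.2.2.2.1 j t ht hne

theorem apply_eq_zero (h : IsSIS u k₁ tstar) (hk : k₁ ≤ k) (hT : tstar k = T) : u T k = 0 :=
  (h.2.2.2.2.2.1 k hk T hT).1

theorem mem_Xset (h : IsSIS u k₁ tstar) (hk : k₁ ≤ k) {t : ℝ} (h₁ : tstar (k - 1) < t)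
    (h₂ : t < tstar k) : u t ∈ Xset k := h.2.2.2.2.2.2 k hk t h₁ h₂

theorem pos_of_tstar_eq (h : IsSIS u k₁ tstar) (hk : k₁ ≤ k) (hT : tstar k = T) : 0 < T :=
  EReal.coe_pos.1 (hT ▸ h.tstar_pos hk)

theorem continuousAt (h : IsSIS u k₁ tstar) {t : ℝ} (ht : 0 < t) (j : ℤ) :
    ContinuousAt (fun s => u s j) t :=
  (h.continuousOn j).continuousAt (Ici_mem_nhds ht)

theorem hasDerivAt_of_mem_Xset (h : IsSIS u k₁ tstar) {t : ℝ} (ht : 0 ≤ t) {κ : ℤ}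
    (hX : u t ∈ Xset κ) (j : ℤ) :
    HasDerivAt (fun s => u s j) (dLap (fun i => dphi (u t i)) j) t :=
  h.hasDerivAt j ht fun κ' hκ' heq => Xset.ne_zero hX κ' (h.apply_eq_zero hκ' heq.symm)

theorem exists_eventually_mem_Xset (h : IsSIS u k₁ tstar) {x : ℝ} (hx : 0 ≤ x) {K : ℤ}
    (hK : k₁ - 1 ≤ K) (hxK : (x : EReal) < tstar K) :
    ∃ κ, k₁ ≤ κ ∧ κ ≤ K ∧ ∀ᶠ t in 𝓝[>] x, u t ∈ Xset κ := by
  obtain ⟨m, ⟨hm₁, hmK, hmx⟩, hmax⟩ := Int.exists_greatest_of_bdd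
    (P := fun m => k₁ - 1 ≤ m ∧ m ≤ K ∧ tstar m ≤ x) ⟨K, fun _ hm => hm.2.1⟩
    ⟨k₁ - 1, le_rfl, hK, by rw [h.tstar_sub_one_eq_zero]; exact_mod_cast hx⟩
  have hmK' : m < K := lt_of_le_of_ne hmK fun hmK => (hmK ▸ hxK).not_ge hmx
  have hx_lt : (x : EReal) < tstar (m + 1) :=
    lt_of_not_ge fun hle => by linarith [hmax (m + 1) ⟨by omega, by omega, hle⟩]
  obtain ⟨y, hxy, hy⟩ := EReal.lt_iff_exists_real_btwn.1 hx_lt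
  refine ⟨m + 1, by omega, by omega, ?_⟩
  filter_upwards [Ioo_mem_nhdsGT (EReal.coe_lt_coe_iff.1 hxy)] with t ht
  refine h.mem_Xset (by omega) ?_ (lt_trans (EReal.coe_lt_coe_iff.2 ht.2) hy)
  rw [add_sub_cancel_right]
  exact hmx.trans_lt (EReal.coe_lt_coe_iff.2 ht.1)

theorem neg_two_le (h : IsSIS u k₁ tstar) {x : ℝ} (hx : 0 ≤ x) {K : ℤ} (hK : k₁ - 1 ≤ K)
    (hxK : (x : EReal) < tstar K) (j : ℤ) : -2 ≤ u x j := by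
  obtain ⟨κ, -, -, hX⟩ := h.exists_eventually_mem_Xset hx hK hxK
  exact ge_of_tendsto
    (((h.continuousOn j) x hx).mono (Ioi_subset_Ici_self.trans (Ici_subset_Ici.2 hx)))
    (hX.mono fun t ht => Xset.neg_two_le ht j)

theorem eventually_mem_Xset_succ_right (h : IsSIS u k₁ tstar) (hk : k₁ ≤ k)
    (hT : tstar k = T) : ∀ᶠ t in 𝓝[>] T, u t ∈ Xset (k + 1) := by
  have hlt : tstar k < tstar (k + 1) := by
    simpa [hT] using h.tstar_sub_one_eq_top_or_lt (k := k + 1) (by omega)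
  obtain ⟨y, hTy, hy⟩ := EReal.lt_iff_exists_real_btwn.1 hlt
  filter_upwards [Ioo_mem_nhdsGT (EReal.coe_lt_coe_iff.1 (hT ▸ hTy))] with t ht
  exact h.mem_Xset (by omega) (by rw [add_sub_cancel_right, hT]; exact_mod_cast ht.1)
    (lt_trans (EReal.coe_lt_coe_iff.2 ht.2) hy)

/-- Otherwise, just after `T` the state would lie both in some `X_κ` with `κ < k` and in
`X_{k+1}`. -/
theorem tstar_sub_one_lt (h : IsSIS u k₁ tstar) (hk : k₁ ≤ k) (hT : tstar k ≠ ⊤) :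
    tstar (k - 1) < tstar k := by
  refine (h.tstar_sub_one_eq_top_or_lt hk).resolve_left fun htop => ?_
  obtain ⟨T, hT⟩ : ∃ T : ℝ, tstar k = T :=
    ⟨_, (EReal.coe_toReal hT (bot_lt_iff_ne_bot.1 (bot_le.trans_lt (h.tstar_pos hk)))).symm⟩
  have hkk₁ : k ≠ k₁ := by rintro rfl; simp [h.tstar_sub_one_eq_zero] at htop
  obtain ⟨κ, -, hκ, hX⟩ := h.exists_eventually_mem_Xset (h.pos_of_tstar_eq hk hT).le
    (K := k - 1) (by omega) (by simp [htop])
  obtain ⟨t, htκ, htk⟩ := (hX.and (h.eventually_mem_Xset_succ_right hk hT)).exists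
  have := Xset.eq htκ htk
  omega

theorem tstar_lt_tstar (h : IsSIS u k₁ tstar) {a b : ℤ} (ha : k₁ - 1 ≤ a) (hab : a < b)
    (hb : tstar b ≠ ⊤) : tstar a < tstar b := by
  induction a, (by omega : a ≤ b - 1) using Int.leInductionDown with
  | base => simpa using h.tstar_sub_one_lt (by omega) hb
  | pred n hn ih =>
    have hlt := ih (by omega) (by omega)
    exact (h.tstar_sub_one_lt (by omega) hlt.ne_top).trans hlt

theorem exists_Ico_mem_Xset (h : IsSIS u k₁ tstar) (hk : k₁ ≤ k) (hT : tstar k = T) :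
    ∃ a, 0 < a ∧ a < T ∧ ∀ t ∈ Ico a T, u t ∈ Xset k := by
  have hlt : max (tstar (k - 1)) 0 < T :=
    max_lt (hT ▸ h.tstar_sub_one_lt hk (hT ▸ EReal.coe_ne_top T)) (hT ▸ h.tstar_pos hk)
  obtain ⟨a, hma, haT⟩ := EReal.lt_iff_exists_real_btwn.1 hlt
  refine ⟨a, EReal.coe_pos.1 ((le_max_right _ _).trans_lt hma), EReal.coe_lt_coe_iff.1 haT,
    fun t ht => h.mem_Xset hk ?_ (hT ▸ EReal.coe_lt_coe_iff.2 ht.2)⟩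
  exact ((le_max_left _ _).trans_lt hma).trans_le (EReal.coe_le_coe_iff.2 ht.1)

/-- Transitions of index `≥ K` do not happen before `T'`, by `tstar_lt_tstar`. -/
theorem isLatticeSolutionOn (h : IsSIS u k₁ tstar) {K : ℤ} (hK : k₁ ≤ K) {T' t₁ : ℝ}
    (hT' : tstar K = T') (ht₁ : t₁ < T') :
    IsLatticeSolutionOn u ((Finset.Icc k₁ (K - 1)).image fun κ => (tstar κ).toReal) 0 t₁ :=
  fun j => ⟨(h.continuousOn j).mono Icc_subset_Ici_self, fun x hx hxE => by
    refine h.hasDerivAt j hx.1.le fun κ hκ heq => ?_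
    rcases lt_or_ge κ K with hκK | hKκ
    · exact hxE (Finset.mem_image.2 ⟨κ, Finset.mem_Icc.2 ⟨hκ, by omega⟩, by simp [← heq]⟩)
    · have hle : tstar K ≤ tstar κ := by
        rcases hKκ.eq_or_lt with rfl | hlt
        exacts [le_rfl, (h.tstar_lt_tstar (by omega) hlt (heq ▸ EReal.coe_ne_top x)).le]
      rw [hT', ← heq, EReal.coe_le_coe_iff] at hle
      linarith [hx.2]⟩

theorem le_max_two_iSup (h : IsSIS u k₁ tstar) {K : ℤ} (hK : k₁ ≤ K) {T' s : ℝ}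
    (hT' : tstar K = T') (hs : 0 ≤ s) (hsT' : s < T') (j : ℤ) :
    u s j ≤ max 2 (⨆ i, u 0 i) := by
  have hlt : ∀ {t : ℝ}, t < T' → (t : EReal) < tstar K := fun ht =>
    hT' ▸ EReal.coe_lt_coe_iff.2 ht
  obtain ⟨κ, -, -, hX⟩ := h.exists_eventually_mem_Xset hs (by omega) (hlt hsT')
  obtain ⟨t₁, hXt₁, hst₁, ht₁T'⟩ := (hX.and (Ioo_mem_nhdsGT hsT')).exists
  have hv := h.isLatticeSolutionOn hK hT' ht₁T'
  have hlow : ∀ i, ∀ t ∈ Icc 0 t₁, -2 ≤ u t i := fun i t ht =>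
    h.neg_two_le ht.1 (by omega) (hlt (ht.2.trans_lt ht₁T')) i
  exact hv.le_max_two_iSup (hv.exists_le_of_neg_two_le hlow (Xset.exists_le hXt₁)) j s
    ⟨hs, hst₁.le⟩

theorem tendsto_dLap (h : IsSIS u k₁ tstar) (hT : 0 < T) (j : ℤ) :
    Tendsto (fun t => dLap (fun i => u t i) j) (𝓝 T) (𝓝 (dLap (fun i => u T i) j)) :=
  (((h.continuousAt hT (j + 1)).sub ((h.continuousAt hT j).const_mul 2)).add
    (h.continuousAt hT (j - 1))).tendsto

theorem eventually_mem_Xset_left (h : IsSIS u k₁ tstar) (hk : k₁ ≤ k) (hT : tstar k = T) :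
    ∀ᶠ t in 𝓝[<] T, 0 < t ∧ u t ∈ Xset k := by
  obtain ⟨a, ha, haT, hX⟩ := h.exists_Ico_mem_Xset hk hT
  filter_upwards [Ico_mem_nhdsLT haT] with t ht
  exact ⟨ha.trans_le ht.1, hX t ht⟩

theorem tendsto_deriv_left (h : IsSIS u k₁ tstar) (hk : k₁ ≤ k) (hT : tstar k = T) :
    Tendsto (deriv fun s => u s k) (𝓝[<] T) (𝓝 (dLap (fun i => u T i) k - 2)) := by
  refine (((h.tendsto_dLap (h.pos_of_tstar_eq hk hT) k).mono_left
    nhdsWithin_le_nhds).sub_const 2).congr' ?_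
  filter_upwards [h.eventually_mem_Xset_left hk hT] with t ⟨ht, hX⟩
  rw [(h.hasDerivAt_of_mem_Xset ht.le hX k).deriv, Xset.dLap_dphi_self hX]

theorem tendsto_deriv_right (h : IsSIS u k₁ tstar) (hk : k₁ ≤ k) (hT : tstar k = T) :
    Tendsto (deriv fun s => u s k) (𝓝[>] T) (𝓝 (dLap (fun i => u T i) k + 2)) := by
  have hT0 := h.pos_of_tstar_eq hk hT
  refine (((h.tendsto_dLap hT0 k).mono_left nhdsWithin_le_nhds).add_const 2).congr' ?_
  filter_upwards [h.eventually_mem_Xset_succ_right hk hT, self_mem_nhdsWithin] with t hX ht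
  rw [(h.hasDerivAt_of_mem_Xset (hT0.trans ht).le hX k).deriv, Xset.dLap_dphi_of_succ hX]

theorem two_le_dLap (h : IsSIS u k₁ tstar) (hk : k₁ ≤ k) (hT : tstar k = T) :
    2 ≤ dLap (fun i => u T i) k := by
  have hL := h.eventually_mem_Xset_left hk hT
  have := nonneg_of_tendsto_deriv_of_lt
    (fun t ht => (h.hasDerivAt_of_mem_Xset ht.1.le ht.2 k).differentiableAt.differentiableWithinAt)
    hL (h.continuousAt (h.pos_of_tstar_eq hk hT) k).continuousWithinAt
    (h.tendsto_deriv_left hk hT)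
    (hL.mono fun t ht => h.apply_eq_zero hk hT ▸ Xset.neg_of_le ht.2 le_rfl)
  linarith

theorem apply_succ_neg (h : IsSIS u k₁ tstar) (hk : k₁ ≤ k) (hT : tstar k = T) :
    u T (k + 1) < 0 := by
  obtain ⟨a, ha, haT, hX⟩ := h.exists_Ico_mem_Xset hk hT
  have hdecay := exp_mul_sub_le_of_deriv_add_mul_le ∅ two_pos haT.le (c := 0)
    ((h.continuousOn (k + 1)).mono (Icc_subset_Ici_self.trans (Ici_subset_Ici.2 ha.le)))
    (fun x hx _ => h.hasDerivAt_of_mem_Xset (ha.trans hx.1).le (hX x (Ioo_subset_Ico_self hx)) _)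
    fun x hx _ => by
      have hXx := hX x (Ioo_subset_Ico_self hx)
      rw [Xset.dLap_dphi_of_lt hXx (lt_add_one k), dLap]
      linarith [Xset.neg_of_le hXx (by omega : k ≤ k + 1 + 1), Xset.neg_of_le hXx le_rfl,
        Xset.neg_of_le hXx (by omega : k ≤ k + 1 - 1)]
  have hua : u a (k + 1) < 0 := Xset.neg_of_le (hX a ⟨le_rfl, haT⟩) (by omega)
  nlinarith [exp_pos (2 * a), exp_pos (2 * T)]

theorem two_lt_apply_sub_one (h : IsSIS u k₁ tstar) (hk : k₁ ≤ k) (hT : tstar k = T) :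
    2 < u T (k - 1) := by
  have := h.two_le_dLap hk hT
  rw [dLap, h.apply_eq_zero hk hT] at this
  linarith [h.apply_succ_neg hk hT]

theorem exp_mul_le_of_tstar_succ (h : IsSIS u k₁ tstar) (hk : k₁ ≤ k) (hT : tstar k = T)
    {T' : ℝ} (hT' : tstar (k + 1) = T') :
    exp (2 * T') * u T' k ≤ (max 2 (⨆ i, u 0 i) + 2) / 2 * (exp (2 * T') - exp (2 * T)) := by
  have hT0 := h.pos_of_tstar_eq hk hT
  have hTT' : T < T' := by
    simpa [hT, hT'] using h.tstar_lt_tstar (a := k) (by omega) (lt_add_one k) (by simp [hT'])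
  have hX : ∀ x ∈ Ioo T T', u x ∈ Xset (k + 1) := fun x hx =>
    h.mem_Xset (by omega) (by simpa [hT] using hx.1) (by simpa [hT'] using hx.2)
  have hgrowth := exp_mul_sub_le_of_deriv_add_mul_le ∅ two_pos hTT'.le
    (c := max 2 (⨆ i, u 0 i) + 2)
    ((h.continuousOn k).mono (Icc_subset_Ici_self.trans (Ici_subset_Ici.2 hT0.le)))
    (fun x hx _ => h.hasDerivAt_of_mem_Xset (hT0.trans hx.1).le (hX x hx) k)
    fun x hx _ => by
      have hXx := hX x hx
      rw [Xset.dLap_dphi_of_succ hXx, dLap]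
      linarith [Xset.neg_of_le hXx le_rfl,
        h.le_max_two_iSup (by omega) hT' (hT0.trans hx.1).le hx.2 (k - 1)]
  rw [h.apply_eq_zero hk hT, mul_zero, sub_zero] at hgrowth
  exact hgrowth

end IsSIS

theorem log_sqrt_le_of_exp_mul_le {D y T T' : ℝ} (hD : 2 ≤ D) (hy : 2 < y)
    (h : exp (2 * T') * y ≤ (D + 2) / 2 * (exp (2 * T') - exp (2 * T))) :
    log (sqrt ((D + 2) / (D - 2))) ≤ T' - T := by
  have hT := exp_pos (2 * T)
  have hT' := exp_pos (2 * T')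
  have hlt : (D + 2) * exp (2 * T) < (D - 2) * exp (2 * T') := by nlinarith
  have hD' : 2 < D := by nlinarith
  rw [log_sqrt (div_pos (by linarith) (by linarith)).le, div_le_iff₀ two_pos,
    log_le_iff_le_exp (div_pos (by linarith) (by linarith)), div_le_iff₀ (by linarith),
    show (T' - T) * 2 = 2 * T' - 2 * T by ring, exp_sub, div_mul_eq_mul_div, le_div_iff₀ hT]
  linarith

/-- Properties of finite phase transitions of single-interface solutions
(Theorem 3.2, second part). -/
theorem single_interface_transition_properties
    (k₁ : ℤ) (u : ℝ → ℤ → ℝ) (tstar : ℤ → EReal) (h : IsSIS u k₁ tstar)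
    (k : ℤ) (hk : k₁ ≤ k) (T : ℝ) (hT : tstar k = (T : EReal)) :
    2 < u T (k - 1) ∧
    (∃ Lm : ℝ,
      Filter.Tendsto (deriv (fun s => u s k)) (nhdsWithin T (Set.Iio T)) (nhds Lm) ∧
      Filter.Tendsto (deriv (fun s => u s k)) (nhdsWithin T (Set.Ioi T)) (nhds (4 + Lm)) ∧
      4 ≤ 4 + Lm) ∧
    (∀ T' : ℝ, tstar (k + 1) = (T' : EReal) →
      Real.log (Real.sqrt ((max 2 (⨆ i : ℤ, u 0 i) + 2) / (max 2 (⨆ i : ℤ, u 0 i) - 2)))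
        ≤ T' - T) := by
  refine ⟨h.two_lt_apply_sub_one hk hT, ⟨_, h.tendsto_deriv_left hk hT, ?_,
    by linarith [h.two_le_dLap hk hT]⟩, fun T' hT' => ?_⟩
  · convert h.tendsto_deriv_right hk hT using 2
    ring
  · have hT'k := h.two_lt_apply_sub_one (k := k + 1) (by omega) hT'
    rw [add_sub_cancel_right] at hT'k
    exact log_sqrt_le_of_exp_mul_le (le_max_left _ _) hT'k (h.exp_mul_le_of_tstar_succ hk hT hT')
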